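/- Suppose u, v, z are smooth functions with u_t = v - u u_x, v_t = z - u v_x, z_t = - u z_x, z_x nowhere zero, and set r := 3(2 v_x - u_x²)/z_x. Then D_t r + u_x r = 6, where D_t = ∂/∂t + u ∂/∂x. -/

import Mathlib

open Real

noncomputable def pdx (f : ℝ → ℝ → ℝ) (x t : ℝ) : ℝ := deriv (fun y => f y t) x

noncomputable def pdt (f : ℝ → ℝ → ℝ) (x t : ℝ) : ℝ := deriv (fun s => f x s) t

/-- The material derivative `D_t = ∂/∂t + u ∂/∂x` associated to the velocity `u`. -/
noncomputable def matDt (u f : ℝ → ℝ → ℝ) : ℝ → ℝ → ℝ :=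
  fun x t => pdt f x t + u x t * pdx f x t

section helpers
variable {f : ℝ → ℝ → ℝ}

lemma hasDerivAt_slice_x (hf : ContDiff ℝ (⊤ : ℕ∞) (Function.uncurry f)) (x t : ℝ) :
    HasDerivAt (fun y => f y t) (fderiv ℝ (Function.uncurry f) (x, t) (1, 0)) x := by
  have h1 : HasFDerivAt (Function.uncurry f) (fderiv ℝ (Function.uncurry f) (x, t)) (x, t) :=
    (hf.differentiable (by simp) (x, t)).hasFDerivAt
  exact h1.comp_hasDerivAt x ((hasDerivAt_id x).prodMk (hasDerivAt_const x t))

lemma hasDerivAt_slice_t (hf : ContDiff ℝ (⊤ : ℕ∞) (Function.uncurry f)) (x t : ℝ) :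
    HasDerivAt (fun s => f x s) (fderiv ℝ (Function.uncurry f) (x, t) (0, 1)) t := by
  have h1 : HasFDerivAt (Function.uncurry f) (fderiv ℝ (Function.uncurry f) (x, t)) (x, t) :=
    (hf.differentiable (by simp) (x, t)).hasFDerivAt
  exact h1.comp_hasDerivAt t ((hasDerivAt_const t x).prodMk (hasDerivAt_id t))

lemma pdx_eq (hf : ContDiff ℝ (⊤ : ℕ∞) (Function.uncurry f)) (x t : ℝ) :
    pdx f x t = fderiv ℝ (Function.uncurry f) (x, t) (1, 0) :=
  (hasDerivAt_slice_x hf x t).deriv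

lemma pdt_eq (hf : ContDiff ℝ (⊤ : ℕ∞) (Function.uncurry f)) (x t : ℝ) :
    pdt f x t = fderiv ℝ (Function.uncurry f) (x, t) (0, 1) :=
  (hasDerivAt_slice_t hf x t).deriv

lemma hasDerivAt_pdx (hf : ContDiff ℝ (⊤ : ℕ∞) (Function.uncurry f)) (x t : ℝ) :
    HasDerivAt (fun y => f y t) (pdx f x t) x :=
  (hasDerivAt_slice_x hf x t).differentiableAt.hasDerivAt

lemma hasDerivAt_pdt (hf : ContDiff ℝ (⊤ : ℕ∞) (Function.uncurry f)) (x t : ℝ) :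
    HasDerivAt (fun s => f x s) (pdt f x t) t :=
  (hasDerivAt_slice_t hf x t).differentiableAt.hasDerivAt

lemma contDiff_pdx (hf : ContDiff ℝ (⊤ : ℕ∞) (Function.uncurry f)) :
    ContDiff ℝ (⊤ : ℕ∞) (Function.uncurry (pdx f)) := by
  have e : Function.uncurry (pdx f)
      = fun p : ℝ × ℝ => fderiv ℝ (Function.uncurry f) p ((1 : ℝ), (0 : ℝ)) := by
    funext p; exact pdx_eq hf p.1 p.2
  rw [e]
  exact (hf.fderiv_right (by simp)).clm_apply contDiff_const

lemma clairaut (hf : ContDiff ℝ (⊤ : ℕ∞) (Function.uncurry f)) (x t : ℝ) :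
    pdt (pdx f) x t = pdx (pdt f) x t := by
  set F := Function.uncurry f with hF
  have hF2 : ContDiff ℝ (⊤ : ℕ∞) (fderiv ℝ F) := hf.fderiv_right (by simp)
  have hsnd : HasFDerivAt (fderiv ℝ F) (fderiv ℝ (fderiv ℝ F) (x, t)) (x, t) :=
    (hF2.differentiable (by simp) (x, t)).hasFDerivAt
  have hsymm := second_derivative_symmetric
    (f' := fderiv ℝ F) (fun y => (hf.differentiable (by simp) y).hasFDerivAt) hsnd
  have h1 : HasDerivAt (fun s => fderiv ℝ F (x, s)) (fderiv ℝ (fderiv ℝ F) (x, t) (0, 1)) t :=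
    hsnd.comp_hasDerivAt t ((hasDerivAt_const t x).prodMk (hasDerivAt_id t))
  have h1' : HasDerivAt (fun s => pdx f x s)
      ((fderiv ℝ (fderiv ℝ F) (x, t) (0, 1)) (1, 0)) t := by
    have e : (fun s => pdx f x s) = fun s =>
        (ContinuousLinearMap.apply ℝ ℝ ((1 : ℝ), (0 : ℝ))) (fderiv ℝ F (x, s)) := by
      funext s; exact pdx_eq hf x s
    rw [e]
    exact (ContinuousLinearMap.apply ℝ ℝ ((1 : ℝ), (0 : ℝ))).hasFDerivAt.comp_hasDerivAt t h1
  have h2 : HasDerivAt (fun y => fderiv ℝ F (y, t)) (fderiv ℝ (fderiv ℝ F) (x, t) (1, 0)) x :=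
    hsnd.comp_hasDerivAt x ((hasDerivAt_id x).prodMk (hasDerivAt_const x t))
  have h2' : HasDerivAt (fun y => pdt f y t)
      ((fderiv ℝ (fderiv ℝ F) (x, t) (1, 0)) (0, 1)) x := by
    have e : (fun y => pdt f y t) = fun y =>
        (ContinuousLinearMap.apply ℝ ℝ ((0 : ℝ), (1 : ℝ))) (fderiv ℝ F (y, t)) := by
      funext y; exact pdt_eq hf y t
    rw [e]
    exact (ContinuousLinearMap.apply ℝ ℝ ((0 : ℝ), (1 : ℝ))).hasFDerivAt.comp_hasDerivAt x h2
  show deriv (fun s => pdx f x s) t = deriv (fun y => pdt f y t) x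
  rw [h1'.deriv, h2'.deriv]
  exact hsymm _ _
end helpers

theorem statement14
    (u v z : ℝ → ℝ → ℝ)
    (hu : ContDiff ℝ (⊤ : ℕ∞) (Function.uncurry u))
    (hv : ContDiff ℝ (⊤ : ℕ∞) (Function.uncurry v))
    (hz : ContDiff ℝ (⊤ : ℕ∞) (Function.uncurry z))
    (heq1 : ∀ x t, pdt u x t = v x t - u x t * pdx u x t)
    (heq2 : ∀ x t, pdt v x t = z x t - u x t * pdx v x t)
    (heq3 : ∀ x t, pdt z x t = - u x t * pdx z x t)
    (hzx : ∀ x t, pdx z x t ≠ 0)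
    (r : ℝ → ℝ → ℝ)
    (hr : ∀ x t, r x t = 3 * (2 * pdx v x t - (pdx u x t) ^ 2) / pdx z x t) :
    ∀ x t, matDt u r x t + pdx u x t * r x t = 6 := by
  intro x t
  set U := u x t
  set ux := pdx u x t with hux
  set vx := pdx v x t with hvx
  set zx := pdx z x t with hzx0
  set uxx := pdx (pdx u) x t with huxx
  set vxx := pdx (pdx v) x t with hvxx
  set zxx := pdx (pdx z) x t with hzxx
  -- mixed derivatives via Clairaut + the PDEs differentiated in x
  have hA : pdt (pdx u) x t = vx - ux ^ 2 - U * uxx := by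
    rw [clairaut hu]
    have e : (fun y => pdt u y t) = fun y => v y t - u y t * pdx u y t :=
      funext fun y => heq1 y t
    have h : HasDerivAt (fun y => v y t - u y t * pdx u y t)
        (vx - (ux * (pdx u x t) + U * uxx)) x :=
      (hasDerivAt_pdx hv x t).sub ((hasDerivAt_pdx hu x t).mul
        (hasDerivAt_pdx (contDiff_pdx hu) x t))
    show deriv (fun y => pdt u y t) x = _
    rw [e, h.deriv]; rw [← hux]; ring
  have hB : pdt (pdx v) x t = zx - ux * vx - U * vxx := by
    rw [clairaut hv]
    have e : (fun y => pdt v y t) = fun y => z y t - u y t * pdx v y t :=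
      funext fun y => heq2 y t
    have h : HasDerivAt (fun y => z y t - u y t * pdx v y t)
        (zx - (ux * (pdx v x t) + U * vxx)) x :=
      (hasDerivAt_pdx hz x t).sub ((hasDerivAt_pdx hu x t).mul
        (hasDerivAt_pdx (contDiff_pdx hv) x t))
    show deriv (fun y => pdt v y t) x = _
    rw [e, h.deriv]; rw [← hvx]; ring
  have hC : pdt (pdx z) x t = -(ux * zx) - U * zxx := by
    rw [clairaut hz]
    have e : (fun y => pdt z y t) = fun y => -u y t * pdx z y t :=
      funext fun y => heq3 y t
    have h : HasDerivAt (fun y => -u y t * pdx z y t)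
        (-ux * (pdx z x t) + -U * zxx) x :=
      ((hasDerivAt_pdx hu x t).neg).mul (hasDerivAt_pdx (contDiff_pdx hz) x t)
    show deriv (fun y => pdt z y t) x = _
    rw [e, h.deriv]; rw [← hzx0]; ring
  -- t-derivative of r
  have hnum_t : HasDerivAt (fun s => 3 * (2 * pdx v x s - (pdx u x s) ^ 2))
      (3 * (2 * pdt (pdx v) x t - 2 * ux * pdt (pdx u) x t)) t := by
    have h := (((hasDerivAt_pdt (contDiff_pdx hv) x t).const_mul 2).sub
      ((hasDerivAt_pdt (contDiff_pdx hu) x t).pow 2)).const_mul 3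
    refine h.congr_deriv ?_
    rw [← hux]; push_cast; ring
  have hrt : HasDerivAt (fun s => r x s)
      ((3 * (2 * pdt (pdx v) x t - 2 * ux * pdt (pdx u) x t) * zx
        - 3 * (2 * vx - ux ^ 2) * pdt (pdx z) x t) / zx ^ 2) t := by
    have e : (fun s => r x s) = fun s =>
        3 * (2 * pdx v x s - (pdx u x s) ^ 2) / pdx z x s := funext fun s => hr x s
    rw [e]
    exact hnum_t.div (hasDerivAt_pdt (contDiff_pdx hz) x t) (hzx x t)
  -- x-derivative of r
  have hnum_x' : HasDerivAt (fun y => 3 * (2 * pdx v y t - (pdx u y t) ^ 2))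
      (3 * (2 * vxx - 2 * ux * uxx)) x := by
    have h := (((hasDerivAt_pdx (contDiff_pdx hv) x t).const_mul 2).sub
      ((hasDerivAt_pdx (contDiff_pdx hu) x t).pow 2)).const_mul 3
    refine h.congr_deriv ?_
    rw [← hux]; push_cast; ring
  have hrx : HasDerivAt (fun y => r y t)
      ((3 * (2 * vxx - 2 * ux * uxx) * zx
        - 3 * (2 * vx - ux ^ 2) * zxx) / zx ^ 2) x := by
    have e : (fun y => r y t) = fun y =>
        3 * (2 * pdx v y t - (pdx u y t) ^ 2) / pdx z y t := funext fun y => hr y t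
    rw [e]
    exact hnum_x'.div (hasDerivAt_pdx (contDiff_pdx hz) x t) (hzx x t)
  -- assemble
  show pdt r x t + U * pdx r x t + ux * r x t = 6
  have e1 : pdt r x t = _ := hrt.deriv
  have e2 : pdx r x t = _ := hrx.deriv
  rw [e1, e2, hr x t, hA, hB, hC, ← hvx, ← hux, ← hzx0]
  have hz0 : zx ≠ 0 := hzx x t
  field_simp
  ring
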